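/- Let k be a positive integer and let α, γ, Q > 0 be numbers such that 1 ≤ Q ≤ α/(16γ). Suppose H is a (γk,γ)-nowhere-dense graph and U ⊆ V(H) satisfies |U| ≤ Qk. Then |shadow_H(U, αk)| ≤ (16Q²γ/α)·k, where shadow_H(U, αk) := {v ∈ V(H) : v has more than αk neighbours in U}. -/

import Mathlib

/-!
Write `S` for the shadow and `d = 2Qγk`. Each vertex of `S` sends more than `αk` edges into `U`,
and each such edge either joins `S \ U` to `U` or lies inside `U`. In a `(γk, γ)`-nowhere-dense
graph two disjoint sets `A`, `B` with `γ|B| ≤ d` span at most `d(|A| + |B|)` edges: otherwise,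
deleting vertices of degree at most `d` one at a time leaves a bipartite subgraph of minimum
degree `> d > γk` whose density exceeds `d/|B| ≥ γ`, a dense spot. A cut of `U` carrying half its
edges reduces the edges inside `U` to this case, so `αk|S| ≤ d|S| + 5d|U|`, which rearranges to
the bound since `d ≤ αk/8`.
-/

/-- An `(m,γ)`-dense spot in a graph `G`: a non-empty bipartite subgraph `(A,B;F)` of `G`
with density greater than `γ` and minimum degree greater than `m`. -/
structure DenseSpot (V : Type) [Fintype V] (G : SimpleGraph V) (m γ : ℝ) where
  A : Finset V
  B : Finset V
  F : SimpleGraph V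
  disj : Disjoint A B
  le : F ≤ G
  bipartite : ∀ ⦃a b : V⦄, F.Adj a b → (a ∈ A ∧ b ∈ B) ∨ (a ∈ B ∧ b ∈ A)
  nonempty : ∃ a b, F.Adj a b
  dense : γ * ((A.card : ℝ) * (B.card : ℝ)) < (F.edgeSet.ncard : ℝ)
  mindeg : ∀ v : V, v ∈ A ∨ v ∈ B → m < ((F.neighborSet v).ncard : ℝ)

/-- A graph is `(m,γ)`-nowhere-dense if it contains no `(m,γ)`-dense spot. -/
def NowhereDense (V : Type) [Fintype V] (G : SimpleGraph V) (m γ : ℝ) : Prop :=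
  IsEmpty (DenseSpot V G m γ)

open Finset

namespace SimpleGraph

variable {V : Type*} (G : SimpleGraph V) [DecidableRel G.Adj]

theorem card_interedges_eq_sum (s t : Finset V) :
    #(G.interedges s t) = ∑ a ∈ s, #{b ∈ t | G.Adj a b} := by
  simp only [interedges_def, card_filter, sum_product]

theorem card_interedges_comm (s t : Finset V) :
    #(G.interedges s t) = #(G.interedges t s) :=
  have := G.symm
  Rel.card_interedges_comm s t

variable [DecidableEq V] {s t : Finset V} {a : V}

theorem card_interedges_insert_left (ha : a ∉ s) (t : Finset V) :
    #(G.interedges (insert a s) t) = #(G.interedges s t) + #{b ∈ t | G.Adj a b} := by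
  rw [card_interedges_eq_sum, card_interedges_eq_sum, sum_insert ha, add_comm]

theorem card_interedges_insert_right (ha : a ∉ t) (s : Finset V) :
    #(G.interedges s (insert a t)) = #(G.interedges s t) + #{b ∈ s | G.Adj a b} := by
  rw [card_interedges_comm, card_interedges_insert_left G ha, card_interedges_comm]

theorem card_interedges_erase_left (ha : a ∈ s) (t : Finset V) :
    #(G.interedges (s.erase a) t) + #{b ∈ t | G.Adj a b} = #(G.interedges s t) := by
  rw [← card_interedges_insert_left G (notMem_erase a s), insert_erase ha]

theorem card_interedges_erase_right (ha : a ∈ t) (s : Finset V) :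
    #(G.interedges s (t.erase a)) + #{b ∈ s | G.Adj a b} = #(G.interedges s t) := by
  rw [← card_interedges_insert_right G (notMem_erase a t), insert_erase ha]

theorem exists_subset_card_interedges_le_four_mul (s : Finset V) :
    ∃ s₁ ⊆ s, #(G.interedges s s) ≤ 4 * #(G.interedges s₁ (s \ s₁)) := by
  induction s using Finset.induction_on with
  | empty => exact ⟨∅, subset_rfl, by simp⟩
  | @insert a s ha ih =>
    obtain ⟨s₁, hs₁, hcut⟩ := ih
    have ha₁ : a ∉ s₁ := fun h ↦ ha (hs₁ h)
    have hself : #(G.interedges (insert a s) (insert a s)) =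
        #(G.interedges s s) + 2 * #{b ∈ s | G.Adj a b} := by
      rw [card_interedges_insert_left G ha, card_interedges_insert_right G ha,
        filter_insert, if_neg (G.irrefl)]
      ring
    have hsplit : #{b ∈ s | G.Adj a b} = #{b ∈ s₁ | G.Adj a b} + #{b ∈ s \ s₁ | G.Adj a b} := by
      rw [← card_union_of_disjoint (disjoint_filter_filter disjoint_sdiff), ← filter_union,
        union_sdiff_of_subset hs₁]
    -- `a` joins the side holding fewer of its neighbours, so half its edges into `s` cross
    rcases le_total #{b ∈ s₁ | G.Adj a b} #{b ∈ s \ s₁ | G.Adj a b} with hle | hle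
    · refine ⟨insert a s₁, insert_subset_insert a hs₁, ?_⟩
      rw [insert_sdiff_insert, sdiff_insert_of_notMem ha, card_interedges_insert_left G ha₁, hself]
      omega
    · refine ⟨s₁, hs₁.trans (subset_insert a s), ?_⟩
      rw [insert_sdiff_of_notMem s ha₁,
        card_interedges_insert_right G (fun h ↦ ha (mem_sdiff.1 h).1), hself]
      omega

theorem exists_subset_lt_card_filter_adj {d : ℝ} (hd : 0 ≤ d) {s t : Finset V}
    (h : d * (#s + #t) < #(G.interedges s t)) :
    ∃ s' ⊆ s, ∃ t' ⊆ t, s'.Nonempty ∧ (∀ a ∈ s', d < #{b ∈ t' | G.Adj a b}) ∧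
      ∀ b ∈ t', d < #{a ∈ s' | G.Adj b a} := by
  induction hn : #s + #t using Nat.strong_induction_on generalizing s t with
  | _ n ih =>
  by_cases hs : ∃ a ∈ s, #{b ∈ t | G.Adj a b} ≤ d
  · obtain ⟨a, ha, hdeg⟩ := hs
    have hcard : (#(s.erase a) : ℝ) + 1 = #s := mod_cast card_erase_add_one ha
    have he : (#(G.interedges (s.erase a) t) : ℝ) + #{b ∈ t | G.Adj a b} = #(G.interedges s t) :=
      mod_cast card_interedges_erase_left G ha t
    obtain ⟨s', hs', t', ht', hne, hdeg'⟩ :=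
      ih (#(s.erase a) + #t) (by rw [← hn]; simp [card_erase_lt_of_mem ha]) (s := s.erase a)
        (by nlinarith) rfl
    exact ⟨s', hs'.trans (erase_subset a s), t', ht', hne, hdeg'⟩
  by_cases ht : ∃ b ∈ t, #{a ∈ s | G.Adj b a} ≤ d
  · obtain ⟨b, hb, hdeg⟩ := ht
    have hcard : (#(t.erase b) : ℝ) + 1 = #t := mod_cast card_erase_add_one hb
    have he : (#(G.interedges s (t.erase b)) : ℝ) + #{a ∈ s | G.Adj b a} = #(G.interedges s t) :=
      mod_cast card_interedges_erase_right G hb s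
    obtain ⟨s', hs', t', ht', hne, hdeg'⟩ :=
      ih (#s + #(t.erase b)) (by rw [← hn]; simp [card_erase_lt_of_mem hb]) (t := t.erase b)
        (by nlinarith) rfl
    exact ⟨s', hs', t', ht'.trans (erase_subset b t), hne, hdeg'⟩
  push Not at hs ht
  refine ⟨s, subset_rfl, t, subset_rfl, nonempty_iff_ne_empty.2 fun hs₀ ↦ ?_, hs, ht⟩
  subst hs₀
  simp only [interedges_empty_left, card_empty, CharP.cast_eq_zero, zero_add] at h
  exact h.not_ge (by positivity)

theorem ncard_neighborSet_between {s t : Finset V} (hst : Disjoint s t) (ha : a ∈ s) :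
    ((G.between s t).neighborSet a).ncard = #{b ∈ t | G.Adj a b} := by
  rw [← Set.ncard_coe_finset]
  congr 1
  ext b
  simp only [mem_neighborSet, between_adj, coe_filter, Set.mem_ofPred_eq, mem_coe]
  have := Finset.disjoint_left.1 hst ha
  have := fun h : b ∈ s ↦ Finset.disjoint_left.1 hst h
  tauto

end SimpleGraph

open SimpleGraph in
theorem nonempty_denseSpot_of_lt_card_filter_adj {V : Type} [Fintype V] [DecidableEq V]
    {G : SimpleGraph V} [DecidableRel G.Adj] {m γ d : ℝ} {s t : Finset V}
    (hst : Disjoint s t) (hs : s.Nonempty) (hd : 0 ≤ d) (hm : m < d) (hγ : γ * #t ≤ d)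
    (hs_deg : ∀ a ∈ s, d < #{b ∈ t | G.Adj a b}) (ht_deg : ∀ b ∈ t, d < #{a ∈ s | G.Adj b a}) :
    Nonempty (DenseSpot V G m γ) := by
  have hF : (G.between s t).IsBipartiteWith s t := between_isBipartiteWith (disjoint_coe.2 hst)
  have hncard (v : V) : (((G.between s t).neighborSet v).ncard : ℝ) = (G.between s t).degree v := by
    rw [Set.ncard_eq_toFinset_card', ← card_neighborFinset_eq_degree, neighborFinset_def]
  have hdeg_t (b : V) (hb : b ∈ t) :
      ((G.between s t).neighborSet b).ncard = #{a ∈ s | G.Adj b a} := by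
    rw [between_comm]; exact ncard_neighborSet_between G hst.symm hb
  have hedges : ((G.between s t).edgeSet.ncard : ℝ) = ∑ a ∈ s, (#{b ∈ t | G.Adj a b} : ℝ) := by
    rw [← coe_edgeFinset, Set.ncard_coe_finset, ← isBipartiteWith_sum_degrees_eq_card_edges hF]
    push_cast
    exact sum_congr rfl fun a ha ↦ by rw [← hncard, ncard_neighborSet_between G hst ha]
  obtain ⟨a, ha⟩ := hs
  obtain ⟨b, hb⟩ : {b ∈ t | G.Adj a b}.Nonempty := by
    rw [← card_pos]; exact_mod_cast hd.trans_lt (hs_deg a ha)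
  have hab : (G.between s t).Adj a b := ⟨(mem_filter.1 hb).2, Or.inl ⟨ha, (mem_filter.1 hb).1⟩⟩
  have hdense : γ * (#s * #t) < ((G.between s t).edgeSet.ncard : ℝ) := by
    rw [hedges]
    calc γ * (#s * #t) = ∑ _ ∈ s, γ * #t := by rw [sum_const, nsmul_eq_mul]; ring
      _ ≤ ∑ _ ∈ s, d := sum_le_sum fun _ _ ↦ hγ
      _ < ∑ a ∈ s, (#{b ∈ t | G.Adj a b} : ℝ) := sum_lt_sum_of_nonempty ⟨a, ha⟩ hs_deg
  have hmindeg (v : V) (hv : v ∈ s ∨ v ∈ t) : m < ((G.between s t).neighborSet v).ncard := by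
    rcases hv with hv | hv
    · rw [ncard_neighborSet_between G hst hv]; exact hm.trans (hs_deg v hv)
    · rw [hdeg_t v hv]; exact hm.trans (ht_deg v hv)
  exact ⟨⟨s, t, G.between s t, hst, fun _ _ h ↦ h.1, fun _ _ h ↦ h.2, ⟨a, b, hab⟩, hdense, hmindeg⟩⟩

namespace NowhereDense

variable {V : Type} [Fintype V] [DecidableEq V] {G : SimpleGraph V} [DecidableRel G.Adj]
  {m γ d : ℝ}

theorem card_interedges_le (hG : NowhereDense V G m γ) (hγ : 0 ≤ γ) (hm : m < d)
    {s t : Finset V} (hst : Disjoint s t) (ht : γ * #t ≤ d) :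
    (#(G.interedges s t) : ℝ) ≤ d * (#s + #t) := by
  have hd : 0 ≤ d := (mul_nonneg hγ (Nat.cast_nonneg _)).trans ht
  by_contra! h
  obtain ⟨s', hs', t', ht', hne, hs_deg, ht_deg⟩ := G.exists_subset_lt_card_filter_adj hd h
  have ht'γ : γ * #t' ≤ d := le_trans (by gcongr) ht
  exact (nonempty_denseSpot_of_lt_card_filter_adj (hst.mono hs' ht') hne hd hm ht'γ hs_deg
    ht_deg).elim hG.false

theorem card_interedges_self_le (hG : NowhereDense V G m γ) (hγ : 0 ≤ γ) (hm : m < d)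
    {s : Finset V} (hs : γ * #s ≤ d) :
    (#(G.interedges s s) : ℝ) ≤ 4 * d * #s := by
  obtain ⟨s₁, hs₁, hcut⟩ := G.exists_subset_card_interedges_le_four_mul s
  have hcut' : (#(G.interedges s s) : ℝ) ≤ 4 * #(G.interedges s₁ (s \ s₁)) := mod_cast hcut
  have hcard : (#(s \ s₁) : ℝ) + #s₁ = #s := mod_cast card_sdiff_add_card_eq_card hs₁
  have hs₂ : γ * #(s \ s₁) ≤ d := le_trans (by gcongr; exact sdiff_subset) hs
  have hcross := hG.card_interedges_le hγ hm disjoint_sdiff hs₂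
  rw [add_comm, hcard] at hcross
  linarith

theorem sum_card_filter_adj_le (hG : NowhereDense V G m γ) (hγ : 0 ≤ γ) (hm : m < d)
    {U : Finset V} (hU : γ * #U ≤ d) (S : Finset V) :
    ∑ v ∈ S, (#{u ∈ U | G.Adj v u} : ℝ) ≤ d * #S + 5 * d * #U := by
  have hd : 0 ≤ d := (mul_nonneg hγ (Nat.cast_nonneg _)).trans hU
  have hsplit : ∑ v ∈ S, (#{u ∈ U | G.Adj v u} : ℝ) ≤
      #(G.interedges (S \ U) U) + #(G.interedges U U) := by
    rw [G.card_interedges_eq_sum, G.card_interedges_eq_sum]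
    push_cast
    rw [← sum_union sdiff_disjoint, sdiff_union_self_eq_union]
    exact sum_le_sum_of_subset_of_nonneg subset_union_left fun _ _ _ ↦ by positivity
  have hout := hG.card_interedges_le hγ hm (sdiff_disjoint : Disjoint (S \ U) U) hU
  have hin := hG.card_interedges_self_le hγ hm hU
  have hcard : (#(S \ U) : ℝ) ≤ #S := mod_cast card_le_card sdiff_subset
  nlinarith

end NowhereDense

/-- If `1 ≤ Q ≤ α/(16γ)`, `H` is `(γk,γ)`-nowhere-dense and `|U| ≤ Qk`,
then `|shadow_H(U, αk)| ≤ (16Q²γ/α)·k`, where the shadow consists of the vertices with more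
than `αk` neighbours in `U`. -/
theorem stmt19 (V : Type) [Fintype V] (H : SimpleGraph V)
    (k : ℕ) (hk : 0 < k) (α γ Q : ℝ) (hα : 0 < α) (hγ : 0 < γ)
    (hQ1 : 1 ≤ Q) (hQ2 : Q ≤ α / (16 * γ))
    (hnd : NowhereDense V H (γ * k) γ)
    (U : Set V) (hU : (U.ncard : ℝ) ≤ Q * k) :
    (({v : V | α * k < ((H.neighborSet v ∩ U).ncard : ℝ)}).ncard : ℝ) ≤
      16 * Q ^ 2 * γ / α * k := by
  classical
  have hk : (0 : ℝ) < k := by exact_mod_cast hk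
  have hQγ : 16 * γ * Q ≤ α := by rwa [le_div_iff₀ (by positivity), mul_comm] at hQ2
  set Uf := U.toFinset
  have hUf : (#Uf : ℝ) ≤ Q * k := by rwa [Set.ncard_eq_toFinset_card'] at hU
  have hnbr (v : V) : (H.neighborSet v ∩ U).ncard = #{u ∈ Uf | H.Adj v u} := by
    rw [← Set.ncard_coe_finset]; congr 1; ext u; simp [Uf, and_comm]
  set S : Finset V := {v | α * k < (#{u ∈ Uf | H.Adj v u} : ℝ)}
  have hS : {v : V | α * k < ((H.neighborSet v ∩ U).ncard : ℝ)}.ncard = #S := by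
    rw [← Set.ncard_coe_finset]; congr 1; ext v; simp [S, hnbr]
  have hupper := hnd.sum_card_filter_adj_le hγ.le (d := 2 * Q * γ * k)
    (by nlinarith [mul_pos hγ hk]) (by nlinarith) S
  have hlower : #S • (α * k) ≤ ∑ v ∈ S, (#{u ∈ Uf | H.Adj v u} : ℝ) :=
    card_nsmul_le_sum _ _ _ fun v hv ↦ (mem_filter.1 hv).2.le
  rw [nsmul_eq_mul] at hlower
  have hSα : (#S : ℝ) * α ≤ 2 * Q * γ * #S + 10 * Q ^ 2 * γ * k := by
    have := mul_le_mul_of_nonneg_left hUf (by positivity : (0 : ℝ) ≤ 10 * Q * γ * k)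
    refine le_of_mul_le_mul_right ?_ hk
    nlinarith
  rw [hS, div_mul_eq_mul_div, le_div_iff₀ hα]
  nlinarith
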